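/- arXiv:math/0609823 — 4 statements merged into one kernel-verified Lean document; each statement's English description precedes it below -/
import Mathlib

section
/- Let k ≥ 1. For each sign choice, the difference Dirac operator D_h^± maps the space of homogeneous discrete polynomials of degree k into the space of homogeneous discrete polynomials of degree k−1: if P lies in the real linear span of the lattice functions m ↦ (mh)_∓^{(α)} a with |α| = k and a ∈ Cl_{0,n}, then D_h^± P lies in the real linear span of the lattice functions m ↦ (mh)_∓^{(β)} b with |β| = k−1 and b ∈ Cl_{0,n}. -/
open Finset

noncomputable section

/-- The quadratic form on `ℝⁿ` whose Clifford algebra is `Cl_{0,n}`: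
`Q(x) = −(x₁² + ⋯ + xₙ²)`, so that the generators satisfy `eᵢeⱼ + eⱼeᵢ = −2δᵢⱼ`. -/
def negQ (n : ℕ) : QuadraticForm ℝ (Fin n → ℝ) :=
  QuadraticMap.weightedSumSquares ℝ (fun _ : Fin n => (-1 : ℝ))

/-- The Clifford algebra `Cl_{0,n}`. -/
abbrev Cl (n : ℕ) := CliffordAlgebra (negQ n)

/-- The generators `e i` of `Cl_{0,n}`. -/
def eCl (n : ℕ) (i : Fin n) : Cl n := CliffordAlgebra.ι (negQ n) (Pi.single i 1)

/-- `1` for the forward (upper sign) choice, `-1` for the backward one. -/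
def sgn (σ : Bool) : ℝ := if σ then 1 else -1

/-- Forward/backward difference `∂_h^{±i}` of a lattice function with values in a real module. -/
def fdiff {n : ℕ} {A : Type*} [AddCommGroup A] [Module ℝ A] (σ : Bool) (h : ℝ) (i : Fin n)
    (f : (Fin n → ℤ) → A) : (Fin n → ℤ) → A := fun m =>
  if σ then h⁻¹ • (f (m + Pi.single i 1) - f m) else h⁻¹ • (f m - f (m - Pi.single i 1))

/-- `m ∓ εᵢ` (upper sign paired with the forward difference). -/
def shiftB {n : ℕ} (σ : Bool) (i : Fin n) (m : Fin n → ℤ) : Fin n → ℤ :=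
  if σ then m - Pi.single i 1 else m + Pi.single i 1

/-- One-dimensional factorial power `(x)_∓^{(s)} = ∏_{k=0}^{s-1} (x ∓ k h)`
(upper sign paired with the forward difference `σ = true`). -/
def factPow (σ : Bool) (h x : ℝ) (s : ℕ) : ℝ :=
  ∏ k ∈ range s, (x - sgn σ * k * h)

/-- Multi-index factorial power `(mh)_∓^{(α)}`. -/
def mfp {n : ℕ} (σ : Bool) (h : ℝ) (m : Fin n → ℤ) (α : Fin n → ℕ) : ℝ :=
  ∏ i, factPow σ h (m i * h) (α i)

/-- The difference Dirac operator `D_h^± = Σᵢ eᵢ ∂_h^{±i}`. -/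
def Dirac (n : ℕ) (σ : Bool) (h : ℝ) (f : (Fin n → ℤ) → Cl n) : (Fin n → ℤ) → Cl n :=
  fun m => ∑ i, eCl n i * fdiff σ h i f m

/-- The Clifford vector `mh = Σᵢ (mᵢ h) eᵢ`. -/
def vecCl (n : ℕ) (h : ℝ) (m : Fin n → ℤ) : Cl n := ∑ i, ((m i : ℝ) * h) • eCl n i

/-- The difference Euler operator `(E_h^± f)(m) = Σᵢ (mᵢ h) (∂_h^{±i} f)(m ∓ εᵢ)`. -/
def Euler (n : ℕ) (σ : Bool) (h : ℝ) (f : (Fin n → ℤ) → Cl n) : (Fin n → ℤ) → Cl n :=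
  fun m => ∑ i, ((m i : ℝ) * h) • fdiff σ h i f (shiftB σ i m)

/-- The second-order operator `(A_h^± f)(m) = ∓ h Σᵢ (mᵢ h) (∂_h^{±i} ∂_h^{∓i} f)(m)`. -/
def Aop (n : ℕ) (σ : Bool) (h : ℝ) (f : (Fin n → ℤ) → Cl n) : (Fin n → ℤ) → Cl n :=
  fun m => (-(sgn σ) * h) • ∑ i, ((m i : ℝ) * h) • fdiff σ h i (fdiff (!σ) h i f) m

/-- `L_{jk}^± f = (mⱼ h) ∂_h^{±k} f − (m_k h) ∂_h^{±j} f`. -/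
def Lop (n : ℕ) (σ : Bool) (h : ℝ) (j k : Fin n) (f : (Fin n → ℤ) → Cl n) :
    (Fin n → ℤ) → Cl n :=
  fun m => ((m j : ℝ) * h) • fdiff σ h k f m - ((m k : ℝ) * h) • fdiff σ h j f m

/-- The difference Gamma operator `Γ_h^± f = −Σ_{j<k} eⱼ e_k L_{jk}^± f − A_h^± f`. -/
def Gamma (n : ℕ) (σ : Bool) (h : ℝ) (f : (Fin n → ℤ) → Cl n) : (Fin n → ℤ) → Cl n :=
  fun m => -(∑ j, ∑ k, if j < k then eCl n j * eCl n k * Lop n σ h j k f m else 0)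
    - Aop n σ h f m

/-- `B_h^± = ±h Σᵢ ∂_h^{±i}`. -/
def Bop (n : ℕ) (σ : Bool) (h : ℝ) (f : (Fin n → ℤ) → Cl n) : (Fin n → ℤ) → Cl n :=
  fun m => (sgn σ * h) • ∑ i, fdiff σ h i f m

/-- `(C_h^± f)(m) = Σᵢ (mᵢ h) eᵢ f(m ∓ εᵢ)`. -/
def Cop (n : ℕ) (σ : Bool) (h : ℝ) (f : (Fin n → ℤ) → Cl n) : (Fin n → ℤ) → Cl n :=
  fun m => ∑ i, ((m i : ℝ) * h) • (eCl n i * f (shiftB σ i m))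

/-- `V_{h,r}^± = r I + E_h^± − A_h^± + (1/2) B_h^±`. -/
def Vop (n : ℕ) (σ : Bool) (h r : ℝ) (f : (Fin n → ℤ) → Cl n) : (Fin n → ℤ) → Cl n :=
  fun m => r • f m + Euler n σ h f m - Aop n σ h f m + (1/2 : ℝ) • Bop n σ h f m

/-- `Π_k^±`: the real span of the lattice functions `m ↦ (mh)_∓^{(α)} a` with `|α| ≤ k`. -/
def PiLe (n : ℕ) (σ : Bool) (h : ℝ) (k : ℕ) : Submodule ℝ ((Fin n → ℤ) → Cl n) :=
  Submodule.span ℝ {f | ∃ (α : Fin n → ℕ) (a : Cl n),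
    (∑ i, α i) ≤ k ∧ f = fun m => mfp σ h m α • a}

/-- The space of homogeneous discrete polynomials of degree exactly `k`:
the real span of the lattice functions `m ↦ (mh)_∓^{(α)} a` with `|α| = k`. -/
def PiEq (n : ℕ) (σ : Bool) (h : ℝ) (k : ℕ) : Submodule ℝ ((Fin n → ℤ) → Cl n) :=
  Submodule.span ℝ {f | ∃ (α : Fin n → ℕ) (a : Cl n),
    (∑ i, α i) = k ∧ f = fun m => mfp σ h m α • a}

lemma factPow_shift (σ : Bool) (h x : ℝ) (s : ℕ) :
    factPow σ h (x + sgn σ * h) s - factPow σ h x s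
      = sgn σ * s * h * factPow σ h x (s - 1) := by
  cases s with
  | zero => simp [factPow]
  | succ t =>
    have h1 : factPow σ h (x + sgn σ * h) (t + 1)
        = factPow σ h x t * (x + sgn σ * h) := by
      rw [factPow, Finset.prod_range_succ', factPow]
      congr 1
      · apply Finset.prod_congr rfl; intro k _; push_cast; ring
      · push_cast; ring
    have h2 : factPow σ h x (t + 1) = factPow σ h x t * (x - sgn σ * t * h) := by
      rw [factPow, Finset.prod_range_succ, factPow]
    rw [h1, h2]
    simp only [Nat.add_sub_cancel]
    push_cast; ring

lemma fdiff_mfp {n : ℕ} (σ : Bool) (h : ℝ) (hh : h ≠ 0) (i : Fin n)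
    (α : Fin n → ℕ) (a : Cl n) :
    fdiff σ h i (fun m => mfp σ h m α • a)
      = fun m => (α i : ℝ) • (mfp σ h m (Function.update α i (α i - 1)) • a) := by
  funext m
  set C : ℝ := ∏ j ∈ Finset.univ.erase i, factPow σ h (m j * h) (α j) with hC
  have hsplit : ∀ (m' : Fin n → ℤ), (∀ j, j ≠ i → m' j = m j) →
      mfp σ h m' α = factPow σ h (m' i * h) (α i) * C := by
    intro m' hm'
    rw [mfp, ← Finset.mul_prod_erase Finset.univ _ (Finset.mem_univ i), hC]
    congr 1
    apply Finset.prod_congr rfl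
    intro j hj
    rw [hm' j (Finset.ne_of_mem_erase hj)]
  have hCa : mfp σ h m (Function.update α i (α i - 1))
      = factPow σ h (m i * h) (α i - 1) * C := by
    rw [mfp, ← Finset.mul_prod_erase Finset.univ _ (Finset.mem_univ i), hC,
      Function.update_self]
    congr 1
    apply Finset.prod_congr rfl
    intro j hj
    rw [Function.update_of_ne (Finset.ne_of_mem_erase hj)]
  cases σ with
  | true =>
    have hx : (((m + Pi.single i 1 : Fin n → ℤ) i : ℤ) : ℝ) * h
        = (m i : ℝ) * h + sgn true * h := by
      simp only [Pi.add_apply, Pi.single_eq_same, sgn, if_true]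
      push_cast; ring
    have key : mfp true h (m + Pi.single i 1) α - mfp true h m α
        = (α i : ℝ) * h * mfp true h m (Function.update α i (α i - 1)) := by
      rw [hsplit (m + Pi.single i 1)
          (fun j hj => by simp [Pi.single_apply, hj]),
        hsplit m (fun _ _ => rfl), hCa, hx, ← sub_mul, factPow_shift]
      simp [sgn]; ring
    simp only [fdiff, if_true, ← sub_smul, key, smul_smul]
    congr 1
    field_simp
  | false =>
    have hx : (((m - Pi.single i 1 : Fin n → ℤ) i : ℤ) : ℝ) * h
        = (m i : ℝ) * h + sgn false * h := by
      simp only [Pi.sub_apply, Pi.single_eq_same, sgn, Bool.false_eq_true, if_false]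
      push_cast; ring
    have key : mfp false h m α - mfp false h (m - Pi.single i 1) α
        = (α i : ℝ) * h * mfp false h m (Function.update α i (α i - 1)) := by
      rw [hsplit (m - Pi.single i 1)
          (fun j hj => by simp [Pi.single_apply, hj]),
        hsplit m (fun _ _ => rfl), hCa, hx, ← sub_mul]
      have h2 := factPow_shift false h ((m i : ℝ) * h) (α i)
      rw [show factPow false h ((m i : ℝ) * h) (α i)
          - factPow false h ((m i : ℝ) * h + sgn false * h) (α i)
          = -(factPow false h ((m i : ℝ) * h + sgn false * h) (α i)
            - factPow false h ((m i : ℝ) * h) (α i)) from by ring, h2]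
      simp [sgn]; ring
    simp only [fdiff, Bool.false_eq_true, if_false, ← sub_smul, key, smul_smul]
    congr 1
    field_simp

lemma fdiff_add {n : ℕ} (σ : Bool) (h : ℝ) (i : Fin n) (f g : (Fin n → ℤ) → Cl n) :
    fdiff σ h i (f + g) = fdiff σ h i f + fdiff σ h i g := by
  funext m
  cases σ <;> simp only [fdiff, Pi.add_apply, Bool.false_eq_true, if_false, if_true] <;> module

lemma fdiff_smul {n : ℕ} (σ : Bool) (h : ℝ) (i : Fin n) (c : ℝ) (f : (Fin n → ℤ) → Cl n) :
    fdiff σ h i (c • f) = c • fdiff σ h i f := by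
  funext m
  cases σ <;> simp only [fdiff, Pi.smul_apply, Bool.false_eq_true, if_false, if_true] <;> module

lemma dirac_add (n : ℕ) (σ : Bool) (h : ℝ) (f g : (Fin n → ℤ) → Cl n) :
    Dirac n σ h (f + g) = Dirac n σ h f + Dirac n σ h g := by
  funext m
  simp only [Dirac, fdiff_add, Pi.add_apply, mul_add, ← Finset.sum_add_distrib]

lemma dirac_smul (n : ℕ) (σ : Bool) (h : ℝ) (c : ℝ) (f : (Fin n → ℤ) → Cl n) :
    Dirac n σ h (c • f) = c • Dirac n σ h f := by
  funext m
  simp only [Dirac, fdiff_smul, Pi.smul_apply, mul_smul_comm, Finset.smul_sum]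

/-- Lemma 3.5: the difference Dirac operator maps homogeneous discrete polynomials of
degree `k` to homogeneous discrete polynomials of degree `k − 1`. -/
theorem dirac_maps_homogeneous (n : ℕ) (hn : 1 ≤ n) (h : ℝ) (hh : 0 < h) (σ : Bool)
    (k : ℕ) (hk : 1 ≤ k) (P : (Fin n → ℤ) → Cl n) (hP : P ∈ PiEq n σ h k) :
    Dirac n σ h P ∈ PiEq n σ h (k - 1) := by
  induction hP using Submodule.span_induction with
  | mem f hf =>
    obtain ⟨α, a, hα, rfl⟩ := hf
    have : Dirac n σ h (fun m => mfp σ h m α • a)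
        = ∑ i, (α i : ℝ) • (fun m =>
            mfp σ h m (Function.update α i (α i - 1)) • (eCl n i * a)) := by
      funext m
      simp only [Dirac, fdiff_mfp σ h hh.ne' _ α a, Finset.sum_apply, Pi.smul_apply]
      apply Finset.sum_congr rfl
      intro i _
      rw [mul_smul_comm, mul_smul_comm]
    rw [this]
    apply Submodule.sum_mem
    intro i _
    by_cases hi : α i = 0
    · simp [hi]
    · apply Submodule.smul_mem
      apply Submodule.subset_span
      refine ⟨Function.update α i (α i - 1), eCl n i * a, ?_, rfl⟩
      have hsum : α i + ∑ j ∈ Finset.univ.erase i, α j = k := by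
        rw [Finset.add_sum_erase Finset.univ α (Finset.mem_univ i)]; exact hα
      rw [Finset.sum_update_of_mem (Finset.mem_univ i), ← Finset.erase_eq]
      omega
  | zero =>
    have h0 : Dirac n σ h (0 : (Fin n → ℤ) → Cl n) = 0 := by
      funext m; cases σ <;> simp [Dirac, fdiff]
    rw [h0]; exact Submodule.zero_mem _
  | add f g _ _ hf hg => rw [dirac_add]; exact Submodule.add_mem _ hf hg
  | smul c f _ hf => rw [dirac_smul]; exact Submodule.smul_mem _ c hf
end
end

section
/- Fischer decomposition: let k ≥ 0 and fix a sign choice. For every P ∈ Π_k^± there exist lattice functions M_0, M_1, …, M_k with M_s ∈ Π_{k−s}^± and D_h^± M_s = 0 (discrete monogenic polynomials) such that P = Σ_{s=0}^k (mh)^s · M_s, where (mh)^s · M_s denotes the lattice function m ↦ (mh)^s · M_s(m), the s-th power of the Clifford vector mh acting by pointwise left multiplication. -/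
/-!
In the basis of factorial powers the difference operator `∂_h^{±i}` acts on `(mh)_∓^{(α)}` as the
formal derivative `∂/∂xᵢ` acts on the monomial `x^α`, while multiplication by `mᵢh` acts as
`xᵢ + c xᵢ ∂/∂xᵢ` with `c = ±h`, because `x (x)_∓^{(s)} = (x)_∓^{(s+1)} ± s h (x)_∓^{(s)}`.
Writing discrete polynomials through their coefficient arrays therefore turns `D_h^±` into the
Dirac operator `∂ = Σ eᵢ ∂/∂xᵢ` on Clifford-valued polynomials and multiplication by `mh` into
`X_c = x + c Σ eᵢ xᵢ ∂/∂xᵢ`, so it suffices to prove the Fischer decomposition for `∂` and `X_c`.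

That decomposition follows by induction on the degree once `∂ X_c` is onto the polynomials of
degree `≤ j`. For `c = 0` and homogeneous polynomials this is the classical argument: the
anticommutator `∂x + x∂ = -(2E + n)` gives `∂(x^{s+1} M) = -γ_{s+1} x^s M` for monogenic `M`,
with every `γ_{s+1} > 0`. The deformation `c Σ eᵢ xᵢ ∂/∂xᵢ` preserves the degree, so after `∂`
it only contributes in lower degree and is absorbed degree by degree.
-/

open Finset

noncomputable section

lemma polar_negQ (n : ℕ) (x y : Fin n → ℝ) :
    QuadraticMap.polar (negQ n) x y = -2 * ∑ l, x l * y l := by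
  simp only [QuadraticMap.polar, negQ, QuadraticMap.weightedSumSquares_apply, smul_eq_mul,
    Pi.add_apply, mul_sum, ← sum_sub_distrib]
  exact sum_congr rfl fun l _ => by ring

lemma eCl_mul_eCl_add_swap (n : ℕ) (i j : Fin n) :
    eCl n i * eCl n j + eCl n j * eCl n i = algebraMap ℝ (Cl n) (if i = j then -2 else 0) := by
  rw [eCl, eCl, CliffordAlgebra.ι_mul_ι_add_swap, polar_negQ]
  congr 1
  simp [Pi.single_apply, eq_comm]

lemma eCl_mul_self (n : ℕ) (i : Fin n) : eCl n i * eCl n i = -1 := by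
  have h := eCl_mul_eCl_add_swap n i i
  rw [if_pos rfl, ← two_smul ℝ, Algebra.algebraMap_eq_smul_one, neg_smul, ← smul_neg] at h
  exact smul_right_injective (Cl n) two_ne_zero h

lemma sgn_mul_self (σ : Bool) : sgn σ * sgn σ = 1 := by cases σ <;> norm_num [sgn]

section FactorialPowers

variable {n : ℕ} {σ : Bool} {h : ℝ}

lemma factPow_succ (x : ℝ) (t : ℕ) :
    factPow σ h x (t + 1) = factPow σ h x t * (x - sgn σ * t * h) :=
  prod_range_succ _ _

lemma factPow_add_sgn_succ (x : ℝ) (t : ℕ) :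
    factPow σ h (x + sgn σ * h) (t + 1) = (x + sgn σ * h) * factPow σ h x t := by
  rw [factPow, prod_range_succ', factPow]
  simp only [Nat.cast_add, Nat.cast_one, Nat.cast_zero]
  rw [mul_comm]
  congr 1
  · ring
  · exact prod_congr rfl fun k _ => by ring

lemma factPow_add_sgn_sub (x : ℝ) (t : ℕ) :
    factPow σ h (x + sgn σ * h) t - factPow σ h x t = sgn σ * t * h * factPow σ h x (t - 1) := by
  cases t with
  | zero => simp [factPow]
  | succ t => rw [factPow_add_sgn_succ, factPow_succ, Nat.add_sub_cancel]; push_cast; ring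

lemma mul_factPow (x : ℝ) (t : ℕ) :
    x * factPow σ h x t = factPow σ h x (t + 1) + sgn σ * t * h * factPow σ h x t := by
  rw [factPow_succ]; ring

lemma fdiff_apply {A : Type*} [AddCommGroup A] [Module ℝ A] (i : Fin n) (f : (Fin n → ℤ) → A)
    (m : Fin n → ℤ) : fdiff σ h i f m = (sgn σ / h) • (f (shiftB (!σ) i m) - f m) := by
  cases σ <;> simp [fdiff, shiftB, sgn, div_eq_inv_mul, ← smul_neg]

lemma fdiff_sum {A ι : Type*} [AddCommGroup A] [Module ℝ A] (i : Fin n) (t : Finset ι)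
    (f : ι → (Fin n → ℤ) → A) : fdiff σ h i (∑ s ∈ t, f s) = ∑ s ∈ t, fdiff σ h i (f s) := by
  funext m
  simp only [fdiff_apply, Finset.sum_apply, ← sum_sub_distrib, smul_sum]

lemma shiftB_not_apply_mul (i j : Fin n) (m : Fin n → ℤ) :
    (shiftB (!σ) i m j : ℝ) * h = if j = i then m j * h + sgn σ * h else m j * h := by
  cases σ <;> by_cases hj : j = i <;> simp [shiftB, sgn, hj] <;> ring

lemma mfp_eq_mul_prod_erase (m : Fin n → ℤ) (α : Fin n → ℕ) (i : Fin n) :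
    mfp σ h m α = factPow σ h (m i * h) (α i) * ∏ j ∈ univ.erase i, factPow σ h (m j * h) (α j) :=
  (mul_prod_erase _ _ (mem_univ i)).symm

lemma fdiff_mfp_smul {A : Type*} [AddCommGroup A] [Module ℝ A] (hh : h ≠ 0) (i : Fin n)
    (α : Fin n → ℕ) (a : A) :
    fdiff σ h i (fun m => mfp σ h m α • a)
      = fun m => ((α i : ℕ) : ℝ) • mfp σ h m (α - Pi.single i 1) • a := by
  funext m
  set R := ∏ j ∈ univ.erase i, factPow σ h (m j * h) (α j)
  have hshift : mfp σ h (shiftB (!σ) i m) α = factPow σ h (m i * h + sgn σ * h) (α i) * R := by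
    rw [mfp_eq_mul_prod_erase _ _ i, shiftB_not_apply_mul, if_pos rfl]
    exact congrArg _ <| prod_congr rfl fun j hj => by
      rw [shiftB_not_apply_mul, if_neg (ne_of_mem_erase hj)]
  have hlower : mfp σ h m (α - Pi.single i 1) = factPow σ h (m i * h) (α i - 1) * R := by
    rw [mfp_eq_mul_prod_erase _ _ i]
    simp only [Pi.sub_apply, Pi.single_eq_same]
    exact congrArg _ (prod_congr rfl fun j hj => by simp [ne_of_mem_erase hj])
  rw [fdiff_apply, ← sub_smul, hshift, hlower, mfp_eq_mul_prod_erase _ _ i, ← sub_mul,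
    factPow_add_sgn_sub, smul_smul, smul_smul]
  congr 1
  rw [← mul_div_right_comm, div_eq_iff hh]
  linear_combination (α i : ℝ) * h * factPow σ h (m i * h) (α i - 1) * R * sgn_mul_self σ

lemma mul_mfp (m : Fin n → ℤ) (α : Fin n → ℕ) (i : Fin n) :
    (m i * h) * mfp σ h m α
      = mfp σ h m (α + Pi.single i 1) + sgn σ * h * α i * mfp σ h m α := by
  have hraise : mfp σ h m (α + Pi.single i 1)
      = factPow σ h (m i * h) (α i + 1) * ∏ j ∈ univ.erase i, factPow σ h (m j * h) (α j) := by
    rw [mfp_eq_mul_prod_erase _ _ i]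
    simp only [Pi.add_apply, Pi.single_eq_same]
    exact congrArg _ (prod_congr rfl fun j hj => by simp [ne_of_mem_erase hj])
  rw [hraise, mfp_eq_mul_prod_erase _ _ i, ← mul_assoc, mul_factPow]
  ring

end FactorialPowers

section Abstract

variable {R V : Type*} [Ring R] [AddCommGroup V] [Module R V] {S : ℕ → Submodule R V}
  {D X : Module.End R V}

lemma pow_apply_mem_of_mapsTo (hX : ∀ j, ∀ v ∈ S j, X v ∈ S (j + 1)) (s : ℕ) {j : ℕ}
    {v : V} (hv : v ∈ S j) : (X ^ s) v ∈ S (j + s) := by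
  induction s with
  | zero => simpa using hv
  | succ s ih => rw [pow_succ', Module.End.mul_apply, ← add_assoc]; exact hX _ _ ih

theorem exists_eq_sum_pow_of_surjOn (hX : ∀ j, ∀ v ∈ S j, X v ∈ S (j + 1))
    (hD : ∀ j, ∀ v ∈ S (j + 1), D v ∈ S j) (hD0 : ∀ v ∈ S 0, D v = 0) {k : ℕ}
    (hsurj : ∀ j < k, ∀ g ∈ S j, ∃ q ∈ S j, D (X q) = g) :
    ∀ w ∈ S k, ∃ M : ℕ → V, (∀ s, M s ∈ S (k - s) ∧ D (M s) = 0) ∧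
      w = ∑ s ∈ range (k + 1), (X ^ s) (M s) := by
  induction k with
  | zero =>
    intro w hw
    refine ⟨Pi.single 0 w, fun s => ?_, by simp⟩
    rcases eq_or_ne s 0 with rfl | hs
    · exact ⟨hw, hD0 w hw⟩
    · simp [hs]
  | succ k ih =>
    intro w hw
    obtain ⟨q, hq, hDq⟩ := hsurj k k.lt_succ_self (D w) (hD k w hw)
    obtain ⟨M, hM, hqM⟩ := ih (fun j hj => hsurj j (hj.trans k.lt_succ_self)) q hq
    refine ⟨fun s => if s = 0 then w - X q else M (s - 1), fun s => ?_, ?_⟩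
    · cases s with
      | zero => exact ⟨sub_mem hw (hX k _ hq), by simp [hDq]⟩
      | succ s => simpa using hM s
    · simp [sum_range_succ' _ (k + 1), pow_succ', hqM, map_sum]

end Abstract

namespace Fischer

variable {n : ℕ}

def deg (α : Fin n → ℕ) : ℕ := ∑ i, α i

lemma deg_add_single (α : Fin n → ℕ) (i : Fin n) : deg (α + Pi.single i 1) = deg α + 1 := by
  simp [deg, sum_add_distrib]

lemma sub_single_add_single {α : Fin n → ℕ} {i : Fin n} (hα : α i ≠ 0) :
    α - Pi.single i 1 + Pi.single i 1 = α := by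
  funext j
  rcases eq_or_ne j i with rfl | hj
  · simp; omega
  · simp [hj]

lemma deg_sub_single_add_one {α : Fin n → ℕ} {i : Fin n} (hα : α i ≠ 0) :
    deg (α - Pi.single i 1) + 1 = deg α := by
  rw [← deg_add_single, sub_single_add_single hα]

lemma deg_sub_single_le (α : Fin n → ℕ) (i : Fin n) : deg (α - Pi.single i 1) ≤ deg α :=
  sum_le_sum fun _ _ => tsub_le_self

/-- Coefficient arrays of `Cl_{0,n}`-valued polynomials in commuting variables `x₁, …, xₙ`:
`w β` is the coefficient of `x^β`, and (through `toLattice`) of `(mh)_∓^{(β)}`. -/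
abbrev Coeff (n : ℕ) := (Fin n → ℕ) → Cl n

variable {d k : ℕ} {w : Coeff n}

def homog (n d : ℕ) : Submodule ℝ (Coeff n) := Submodule.pi {β | deg β ≠ d} fun _ => ⊥

def degLE (n k : ℕ) : Submodule ℝ (Coeff n) := Submodule.pi {β | k < deg β} fun _ => ⊥

lemma mem_homog : w ∈ homog n d ↔ ∀ β, deg β ≠ d → w β = 0 := by
  simp [homog, Submodule.mem_pi]

lemma mem_degLE : w ∈ degLE n k ↔ ∀ β, k < deg β → w β = 0 := by
  simp [degLE, Submodule.mem_pi]

lemma homog_le_degLE (d : ℕ) : homog n d ≤ degLE n d := fun _ hw =>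
  mem_degLE.2 fun β hβ => mem_homog.1 hw β hβ.ne'

lemma degLE_zero_le_homog : degLE n 0 ≤ homog n 0 := fun _ hw =>
  mem_homog.2 fun β hβ => mem_degLE.1 hw β (Nat.pos_of_ne_zero hβ)

lemma degLE_mono {K : ℕ} (hkK : k ≤ K) : degLE n k ≤ degLE n K := fun _ hw =>
  mem_degLE.2 fun β hβ => mem_degLE.1 hw β (hkK.trans_lt hβ)

lemma single_mem_degLE {α : Fin n → ℕ} (hα : deg α ≤ k) (a : Cl n) :
    Pi.single α a ∈ degLE n k :=
  mem_degLE.2 fun β hβ => by rw [Pi.single_apply, if_neg (by rintro rfl; omega)]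

lemma indicator_mem_homog (d : ℕ) (w : Coeff n) : {β | deg β = d}.indicator w ∈ homog n d :=
  mem_homog.2 fun _ hβ => Set.indicator_of_notMem (s := {β | deg β = d}) hβ w

lemma sub_indicator_mem_degLE (hw : w ∈ degLE n (k + 1)) :
    w - {β | deg β = k + 1}.indicator w ∈ degLE n k := by
  refine mem_degLE.2 fun β hβ => ?_
  by_cases hd : deg β = k + 1
  · simp [Set.indicator_of_mem (show β ∈ {β | deg β = k + 1} from hd)]
  · simp [Set.indicator_of_notMem (show β ∉ {β | deg β = k + 1} from hd),
      mem_degLE.1 hw β (by omega)]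

def degFinset (n k : ℕ) : Finset (Fin n → ℕ) :=
  (range (k + 1)).biUnion (Finset.Nat.antidiagonalTuple n)

lemma mem_degFinset {α : Fin n → ℕ} : α ∈ degFinset n k ↔ deg α ≤ k := by
  simp [degFinset, deg, Nat.mem_antidiagonalTuple]

lemma eq_sum_single_of_mem_degLE (hw : w ∈ degLE n k) :
    w = ∑ α ∈ degFinset n k, Pi.single α (w α) := by
  funext β
  rw [Finset.sum_apply, Finset.sum_pi_single]
  split_ifs with hβ
  · rfl
  · exact mem_degLE.1 hw β (by simpa [mem_degFinset] using hβ)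

lemma map_eq_sum_single {M : Type*} [AddCommGroup M] [Module ℝ M] (f : Coeff n →ₗ[ℝ] M)
    (hw : w ∈ degLE n k) : f w = ∑ α ∈ degFinset n k, f (Pi.single α (w α)) := by
  conv_lhs => rw [eq_sum_single_of_mem_degLE hw]
  exact map_sum f _ _

def mulLeft (a : Cl n) : Module.End ℝ (Coeff n) := (LinearMap.mulLeft ℝ a).compLeft _

def pderiv (i : Fin n) : Module.End ℝ (Coeff n) where
  toFun w β := ((β i + 1 : ℕ) : ℝ) • w (β + Pi.single i 1)
  map_add' u v := by funext β; simp
  map_smul' c u := by funext β; simp [smul_comm c]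

def mulVar (i : Fin n) : Module.End ℝ (Coeff n) where
  toFun w β := if β i = 0 then 0 else w (β - Pi.single i 1)
  map_add' u v := by funext β; split_ifs <;> simp [*]
  map_smul' c u := by funext β; split_ifs <;> simp [*]

@[simp] lemma mulLeft_apply (a : Cl n) (w : Coeff n) (β : Fin n → ℕ) :
    mulLeft a w β = a * w β := rfl

@[simp] lemma pderiv_apply (i : Fin n) (w : Coeff n) (β : Fin n → ℕ) :
    pderiv i w β = ((β i + 1 : ℕ) : ℝ) • w (β + Pi.single i 1) := rfl

@[simp] lemma mulVar_apply (i : Fin n) (w : Coeff n) (β : Fin n → ℕ) :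
    mulVar i w β = if β i = 0 then 0 else w (β - Pi.single i 1) := rfl

lemma mulLeft_mul_mulLeft (a b : Cl n) : mulLeft a * mulLeft b = mulLeft (a * b) := by
  ext w β; simp [mul_assoc]

lemma mulLeft_add (a b : Cl n) : mulLeft (a + b) = mulLeft a + mulLeft b := by
  ext w β; simp [add_mul]

lemma mulLeft_algebraMap (r : ℝ) : mulLeft (algebraMap ℝ (Cl n) r) = r • 1 := by
  ext w β; simp [Algebra.smul_def]

lemma pderiv_mul_mulLeft (i : Fin n) (a : Cl n) : pderiv i * mulLeft a = mulLeft a * pderiv i := by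
  ext w β; simp

lemma mulVar_mul_mulLeft (i : Fin n) (a : Cl n) : mulVar i * mulLeft a = mulLeft a * mulVar i := by
  ext w β; simp

lemma mulVar_mul_pderiv_apply (i : Fin n) (w : Coeff n) (β : Fin n → ℕ) :
    (mulVar i * pderiv i) w β = ((β i : ℕ) : ℝ) • w β := by
  rcases eq_or_ne (β i) 0 with hβ | hβ
  · simp [hβ]
  · simp [hβ, sub_single_add_single hβ, Nat.cast_sub (Nat.one_le_iff_ne_zero.2 hβ)]

lemma pderiv_mul_mulVar (i j : Fin n) :
    pderiv j * mulVar i = mulVar i * pderiv j + if i = j then 1 else 0 := by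
  ext w β
  rcases eq_or_ne i j with rfl | hij
  · rcases eq_or_ne (β i) 0 with hβ | hβ
    · simp [hβ]
    · simp [hβ, sub_single_add_single hβ, Nat.cast_sub (Nat.one_le_iff_ne_zero.2 hβ), add_smul]
  · have hidx : β + Pi.single j 1 - Pi.single i 1 = β - Pi.single i 1 + Pi.single j 1 := by
      funext l
      rcases eq_or_ne l i with rfl | hli <;> rcases eq_or_ne l j with rfl | hlj <;> simp_all
    simp [hij, hidx]

lemma pderiv_single (i : Fin n) (α : Fin n → ℕ) (a : Cl n) :
    pderiv i (Pi.single α a) = ((α i : ℕ) : ℝ) • Pi.single (α - Pi.single i 1) a := by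
  funext β
  rw [pderiv_apply, Pi.smul_apply]
  by_cases hβ : β + Pi.single i 1 = α
  · subst hβ; simp
  · rcases eq_or_ne (α i) 0 with hα | hα
    · simp [hα, hβ]
    · have : β ≠ α - Pi.single i 1 := fun h => hβ (h ▸ sub_single_add_single hα)
      simp [hβ, this]

lemma mulVar_mul_pderiv_single (i : Fin n) (α : Fin n → ℕ) (a : Cl n) :
    (mulVar i * pderiv i) (Pi.single α a) = ((α i : ℕ) : ℝ) • Pi.single α a := by
  funext β
  rw [mulVar_mul_pderiv_apply]
  by_cases hβ : β = α
  · subst hβ; simp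
  · simp [hβ]

lemma mulVar_single (i : Fin n) (α : Fin n → ℕ) (a : Cl n) :
    mulVar i (Pi.single α a) = Pi.single (α + Pi.single i 1) a := by
  funext β
  rw [mulVar_apply]
  by_cases hβ : β = α + Pi.single i 1
  · subst hβ; simp
  · split_ifs with hi
    · simp [hβ]
    · have : β - Pi.single i 1 ≠ α := fun h => hβ (h ▸ (sub_single_add_single hi).symm)
      simp [hβ, this]

def dirac (n : ℕ) : Module.End ℝ (Coeff n) := ∑ i, mulLeft (eCl n i) * pderiv i

def mulVec (n : ℕ) : Module.End ℝ (Coeff n) := ∑ i, mulLeft (eCl n i) * mulVar i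

def cliffordEuler (n : ℕ) : Module.End ℝ (Coeff n) := ∑ i, mulLeft (eCl n i) * (mulVar i * pderiv i)

/-- Multiplication by the Clifford vector `mh` read in the factorial-power basis, for `c = ±h`. -/
def deformedMulVec (n : ℕ) (c : ℝ) : Module.End ℝ (Coeff n) := mulVec n + c • cliffordEuler n

lemma deformedMulVec_eq_sum (c : ℝ) :
    deformedMulVec n c = ∑ i, mulLeft (eCl n i) * (mulVar i + c • (mulVar i * pderiv i)) := by
  simp [deformedMulVec, mulVec, cliffordEuler, mul_add, sum_add_distrib, smul_sum]

lemma anticommutator_term (i j : Fin n) :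
    mulLeft (eCl n j) * pderiv j * (mulLeft (eCl n i) * mulVar i)
      + mulLeft (eCl n i) * mulVar i * (mulLeft (eCl n j) * pderiv j)
      = mulLeft (eCl n j * eCl n i + eCl n i * eCl n j) * (mulVar i * pderiv j)
        + if i = j then mulLeft (eCl n j * eCl n i) else 0 := by
  calc _ = mulLeft (eCl n j) * (pderiv j * mulLeft (eCl n i)) * mulVar i
        + mulLeft (eCl n i) * (mulVar i * mulLeft (eCl n j)) * pderiv j := by simp only [mul_assoc]
    _ = mulLeft (eCl n j * eCl n i) * (pderiv j * mulVar i)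
        + mulLeft (eCl n i * eCl n j) * (mulVar i * pderiv j) := by
      rw [pderiv_mul_mulLeft, mulVar_mul_mulLeft]
      simp only [← mul_assoc, mulLeft_mul_mulLeft]
    _ = _ := by
      rw [pderiv_mul_mulVar, mulLeft_add]
      split_ifs <;> noncomm_ring

lemma anticommutator_term_apply (i j : Fin n) (w : Coeff n) (β : Fin n → ℕ) :
    (mulLeft (eCl n j) * pderiv j * (mulLeft (eCl n i) * mulVar i)
      + mulLeft (eCl n i) * mulVar i * (mulLeft (eCl n j) * pderiv j)) w β
      = if i = j then (-(2 * β i + 1 : ℝ)) • w β else 0 := by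
  rw [anticommutator_term, add_comm (eCl n j * eCl n i), eCl_mul_eCl_add_swap, mulLeft_algebraMap]
  split_ifs with hij
  · subst hij
    simp only [LinearMap.add_apply, smul_mul_assoc, one_mul, LinearMap.smul_apply,
      eCl_mul_self, Pi.add_apply, Pi.smul_apply, mulVar_mul_pderiv_apply, mulLeft_apply]
    rw [neg_one_mul]
    module
  · simp

lemma anticommutator_dirac_mulVec_apply (w : Coeff n) (β : Fin n → ℕ) :
    (dirac n * mulVec n + mulVec n * dirac n) w β = (-(2 * deg β + n : ℝ)) • w β := by
  simp only [dirac, mulVec, Finset.sum_mul, Finset.mul_sum]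
  rw [Finset.sum_comm (s := univ), ← sum_add_distrib]
  simp only [← sum_add_distrib, anticommutator_term_apply, LinearMap.sum_apply, Finset.sum_apply,
    sum_ite_eq', mem_univ, if_true, ← sum_smul]
  congr 1
  simp [deg, sum_add_distrib, mul_sum]

lemma mulLeft_mem_homog (a : Cl n) (hw : w ∈ homog n d) : mulLeft a w ∈ homog n d :=
  mem_homog.2 fun β hβ => by simp [mem_homog.1 hw β hβ]

lemma mulLeft_mem_degLE (a : Cl n) (hw : w ∈ degLE n k) : mulLeft a w ∈ degLE n k :=
  mem_degLE.2 fun β hβ => by simp [mem_degLE.1 hw β hβ]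

lemma pderiv_mem_homog (i : Fin n) (hw : w ∈ homog n (d + 1)) : pderiv i w ∈ homog n d :=
  mem_homog.2 fun β hβ => by
    rw [pderiv_apply, mem_homog.1 hw (β + Pi.single i 1) (by rw [deg_add_single]; omega), smul_zero]

lemma pderiv_mem_degLE (i : Fin n) (hw : w ∈ degLE n (k + 1)) : pderiv i w ∈ degLE n k :=
  mem_degLE.2 fun β hβ => by
    rw [pderiv_apply, mem_degLE.1 hw (β + Pi.single i 1) (by rw [deg_add_single]; omega), smul_zero]

lemma pderiv_eq_zero_of_mem_degLE_zero (i : Fin n) (hw : w ∈ degLE n 0) : pderiv i w = 0 :=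
  funext fun β => by
    rw [pderiv_apply, mem_degLE.1 hw (β + Pi.single i 1) (by rw [deg_add_single]; omega), smul_zero]
    rfl

lemma mulVar_mem_homog (i : Fin n) (hw : w ∈ homog n d) : mulVar i w ∈ homog n (d + 1) := by
  refine mem_homog.2 fun β hβ => ?_
  rw [mulVar_apply]
  split_ifs with hi
  · rfl
  · exact mem_homog.1 hw _ (by have := deg_sub_single_add_one hi; omega)

lemma mulVar_mem_degLE (i : Fin n) (hw : w ∈ degLE n k) : mulVar i w ∈ degLE n (k + 1) := by
  refine mem_degLE.2 fun β hβ => ?_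
  rw [mulVar_apply]
  split_ifs with hi
  · rfl
  · exact mem_degLE.1 hw _ (by have := deg_sub_single_add_one hi; omega)

lemma mulVar_mul_pderiv_mem_degLE (i : Fin n) (hw : w ∈ degLE n k) :
    (mulVar i * pderiv i) w ∈ degLE n k :=
  mem_degLE.2 fun β hβ => by rw [mulVar_mul_pderiv_apply, mem_degLE.1 hw β hβ, smul_zero]

lemma dirac_mem_homog (hw : w ∈ homog n (d + 1)) : dirac n w ∈ homog n d := by
  rw [dirac, LinearMap.sum_apply]
  exact Submodule.sum_mem _ fun i _ => mulLeft_mem_homog _ (pderiv_mem_homog i hw)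

lemma dirac_mem_degLE (hw : w ∈ degLE n (k + 1)) : dirac n w ∈ degLE n k := by
  rw [dirac, LinearMap.sum_apply]
  exact Submodule.sum_mem _ fun i _ => mulLeft_mem_degLE _ (pderiv_mem_degLE i hw)

lemma dirac_eq_zero_of_mem_degLE_zero (hw : w ∈ degLE n 0) : dirac n w = 0 := by
  simp [dirac, pderiv_eq_zero_of_mem_degLE_zero _ hw]

lemma mulVec_mem_homog (hw : w ∈ homog n d) : mulVec n w ∈ homog n (d + 1) := by
  rw [mulVec, LinearMap.sum_apply]
  exact Submodule.sum_mem _ fun i _ => mulLeft_mem_homog _ (mulVar_mem_homog i hw)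

lemma deformedMulVec_mem_degLE (c : ℝ) (hw : w ∈ degLE n k) :
    deformedMulVec n c w ∈ degLE n (k + 1) := by
  rw [deformedMulVec, LinearMap.add_apply, mulVec, LinearMap.sum_apply, LinearMap.smul_apply,
    cliffordEuler, LinearMap.sum_apply]
  refine add_mem (Submodule.sum_mem _ fun i _ => mulLeft_mem_degLE _ (mulVar_mem_degLE i hw))
    (Submodule.smul_mem _ _ (Submodule.sum_mem _ fun i _ => mulLeft_mem_degLE _ ?_))
  exact degLE_mono k.le_succ (mulVar_mul_pderiv_mem_degLE i hw)

lemma cliffordEuler_eq_zero_of_mem_degLE_zero (hw : w ∈ degLE n 0) : cliffordEuler n w = 0 := by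
  simp [cliffordEuler, pderiv_eq_zero_of_mem_degLE_zero _ hw]

lemma dirac_cliffordEuler_mem_degLE (hw : w ∈ degLE n (k + 1)) :
    dirac n (cliffordEuler n w) ∈ degLE n k := by
  refine dirac_mem_degLE ?_
  rw [cliffordEuler, LinearMap.sum_apply]
  exact Submodule.sum_mem _ fun i _ => mulLeft_mem_degLE _ (mulVar_mul_pderiv_mem_degLE i hw)

lemma dirac_mulVec_of_mem_homog (hw : w ∈ homog n d) :
    dirac n (mulVec n w) = (-(2 * d + n : ℝ)) • w - mulVec n (dirac n w) := by
  funext β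
  have h := anticommutator_dirac_mulVec_apply w β
  rw [LinearMap.add_apply, Module.End.mul_apply, Module.End.mul_apply, Pi.add_apply] at h
  rw [Pi.sub_apply, eq_sub_of_add_eq h, Pi.smul_apply]
  by_cases hβ : deg β = d
  · rw [hβ]
  · simp [mem_homog.1 hw β hβ]

def fischerGamma (n t s : ℕ) : ℝ := if Even s then s else 2 * t + n + s - 1

lemma fischerGamma_zero (n t : ℕ) : fischerGamma n t 0 = 0 := by simp [fischerGamma]

lemma fischerGamma_succ (n t s : ℕ) :
    fischerGamma n t (s + 1) = 2 * (t + s) + n - fischerGamma n t s := by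
  rcases Nat.even_or_odd s with hs | hs
  · simp [fischerGamma, hs, Nat.even_add_one]; ring
  · simp [fischerGamma, hs, Nat.not_even_iff_odd.2 hs]; ring

lemma fischerGamma_pos (hn : 1 ≤ n) (t : ℕ) {s : ℕ} (hs : s ≠ 0) : 0 < fischerGamma n t s := by
  have : (1 : ℝ) ≤ n := by exact_mod_cast hn
  unfold fischerGamma
  split_ifs
  · positivity
  · have : (1 : ℝ) ≤ s := by exact_mod_cast Nat.one_le_iff_ne_zero.2 hs
    linarith [t.cast_nonneg (α := ℝ)]

lemma dirac_mulVec_pow {t : ℕ} {u : Coeff n} (hu : u ∈ homog n t) (hDu : dirac n u = 0) (s : ℕ) :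
    dirac n (mulVec n ((mulVec n ^ s) u)) = -fischerGamma n t (s + 1) • (mulVec n ^ s) u := by
  induction s with
  | zero => simp [dirac_mulVec_of_mem_homog hu, hDu, fischerGamma_succ, fischerGamma_zero]
  | succ s ih =>
    have hmem : (mulVec n ^ (s + 1)) u ∈ homog n (t + (s + 1)) :=
      pow_apply_mem_of_mapsTo (S := homog n) (fun _ _ => mulVec_mem_homog) (s + 1) hu
    rw [dirac_mulVec_of_mem_homog hmem, pow_succ', Module.End.mul_apply, ih, map_smul,
      fischerGamma_succ n t (s + 1)]
    push_cast
    module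

theorem exists_mem_homog_dirac_mulVec_eq (hn : 1 ≤ n) (d : ℕ) :
    ∀ g ∈ homog n d, ∃ q ∈ homog n d, dirac n (mulVec n q) = g := by
  induction d using Nat.strong_induction_on with
  | _ d ih =>
    intro g hg
    obtain ⟨M, hM, rfl⟩ := exists_eq_sum_pow_of_surjOn (S := homog n)
      (fun _ _ => mulVec_mem_homog) (fun _ _ => dirac_mem_homog)
      (fun _ hv => dirac_eq_zero_of_mem_degLE_zero (homog_le_degLE 0 hv)) ih g hg
    refine ⟨∑ s ∈ range (d + 1), (-fischerGamma n (d - s) (s + 1))⁻¹ • (mulVec n ^ s) (M s),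
      Submodule.sum_mem _ fun s hs => Submodule.smul_mem _ _ ?_, ?_⟩
    · have := pow_apply_mem_of_mapsTo (S := homog n) (fun _ _ => mulVec_mem_homog) s (hM s).1
      rwa [Nat.sub_add_cancel (Nat.lt_succ_iff.1 (mem_range.1 hs))] at this
    · simp only [map_sum, map_smul, dirac_mulVec_pow (hM _).1 (hM _).2, smul_smul]
      refine sum_congr rfl fun s _ => ?_
      rw [inv_mul_cancel₀ (neg_ne_zero.2 (fischerGamma_pos hn _ s.succ_ne_zero).ne'), one_smul]

theorem exists_mem_degLE_dirac_deformedMulVec_eq (hn : 1 ≤ n) (c : ℝ) (k : ℕ) :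
    ∀ g ∈ degLE n k, ∃ q ∈ degLE n k, dirac n (deformedMulVec n c q) = g := by
  induction k with
  | zero =>
    intro g hg
    obtain ⟨q, hq, hDq⟩ := exists_mem_homog_dirac_mulVec_eq hn 0 g (degLE_zero_le_homog hg)
    have hq' := homog_le_degLE 0 hq
    refine ⟨q, hq', ?_⟩
    rw [deformedMulVec, LinearMap.add_apply, LinearMap.smul_apply,
      cliffordEuler_eq_zero_of_mem_degLE_zero hq', smul_zero, add_zero, hDq]
  | succ k ih =>
    intro g hg
    obtain ⟨q₁, hq₁, hDq₁⟩ :=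
      exists_mem_homog_dirac_mulVec_eq hn (k + 1) _ (indicator_mem_homog (k + 1) g)
    obtain ⟨q₂, hq₂, hDq₂⟩ := ih (g - {β | deg β = k + 1}.indicator g
      - c • dirac n (cliffordEuler n q₁)) (sub_mem (sub_indicator_mem_degLE hg)
        (Submodule.smul_mem _ _ (dirac_cliffordEuler_mem_degLE (homog_le_degLE _ hq₁))))
    refine ⟨q₁ + q₂, add_mem (homog_le_degLE _ hq₁) (degLE_mono k.le_succ hq₂), ?_⟩
    rw [map_add, map_add, hDq₂, deformedMulVec, LinearMap.add_apply, LinearMap.smul_apply,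
      map_add, map_smul, hDq₁]
    abel

theorem exists_eq_sum_deformedMulVec_pow (hn : 1 ≤ n) (c : ℝ) (k : ℕ) :
    ∀ w ∈ degLE n k, ∃ M : ℕ → Coeff n, (∀ s, M s ∈ degLE n (k - s) ∧ dirac n (M s) = 0) ∧
      w = ∑ s ∈ range (k + 1), (deformedMulVec n c ^ s) (M s) :=
  exists_eq_sum_pow_of_surjOn (S := degLE n) (fun _ _ => deformedMulVec_mem_degLE c)
    (fun _ _ => dirac_mem_degLE) (fun _ => dirac_eq_zero_of_mem_degLE_zero)
    (fun j _ => exists_mem_degLE_dirac_deformedMulVec_eq hn c j)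

section Lattice

def toLattice (σ : Bool) (h : ℝ) (k : ℕ) : Coeff n →ₗ[ℝ] (Fin n → ℤ) → Cl n where
  toFun w m := ∑ α ∈ degFinset n k, mfp σ h m α • w α
  map_add' u v := by funext m; simp [smul_add, sum_add_distrib]
  map_smul' c u := by funext m; simp [smul_sum, smul_comm c]

variable {σ : Bool} {h : ℝ}

lemma toLattice_eq_sum (k : ℕ) (w : Coeff n) :
    toLattice σ h k w = ∑ α ∈ degFinset n k, fun m => mfp σ h m α • w α := by
  funext m; simp [toLattice]

lemma toLattice_single {α : Fin n → ℕ} (hα : deg α ≤ k) (a : Cl n) :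
    toLattice σ h k (Pi.single α a) = fun m => mfp σ h m α • a := by
  funext m
  simp [toLattice, Pi.single_apply, mem_degFinset.2 hα]

lemma toLattice_mulLeft_apply (k : ℕ) (a : Cl n) (w : Coeff n) (m : Fin n → ℤ) :
    toLattice σ h k (mulLeft a w) m = a * toLattice σ h k w m := by
  simp [toLattice, mul_sum]

lemma fdiff_toLattice (hh : h ≠ 0) (i : Fin n) (hw : w ∈ degLE n k) :
    fdiff σ h i (toLattice σ h k w) = toLattice σ h k (pderiv i w) := by
  calc fdiff σ h i (toLattice σ h k w)
      = ∑ α ∈ degFinset n k, fdiff σ h i (fun m => mfp σ h m α • w α) := by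
        rw [toLattice_eq_sum, fdiff_sum]
    _ = ∑ α ∈ degFinset n k, toLattice σ h k (pderiv i (Pi.single α (w α))) := by
        refine sum_congr rfl fun α hα => ?_
        rw [fdiff_mfp_smul hh, pderiv_single, map_smul,
          toLattice_single ((deg_sub_single_le α i).trans (mem_degFinset.1 hα))]
        rfl
    _ = toLattice σ h k (pderiv i w) :=
        (map_eq_sum_single ((toLattice σ h k).comp (pderiv i)) hw).symm

lemma coord_mul_toLattice (i : Fin n) (hw : w ∈ degLE n k) :
    (fun m => ((m i : ℝ) * h) • toLattice σ h k w m)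
      = toLattice σ h (k + 1) ((mulVar i + (sgn σ * h) • (mulVar i * pderiv i)) w) := by
  calc (fun m => ((m i : ℝ) * h) • toLattice σ h k w m)
      = ∑ α ∈ degFinset n k, fun m => ((m i : ℝ) * h) • mfp σ h m α • w α := by
        funext m; simp [toLattice, smul_sum]
    _ = ∑ α ∈ degFinset n k, toLattice σ h (k + 1)
          ((mulVar i + (sgn σ * h) • (mulVar i * pderiv i)) (Pi.single α (w α))) := by
        refine sum_congr rfl fun α hα => ?_
        have hα' := mem_degFinset.1 hα
        rw [LinearMap.add_apply, LinearMap.smul_apply, mulVar_single, mulVar_mul_pderiv_single,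
          map_add, map_smul, map_smul, toLattice_single (by rw [deg_add_single]; omega),
          toLattice_single (by omega)]
        funext m
        simp only [smul_smul, Pi.add_apply, Pi.smul_apply, mul_mfp, add_smul]
    _ = _ := (map_eq_sum_single ((toLattice σ h (k + 1)).comp _) hw).symm

lemma Dirac_toLattice (hh : h ≠ 0) (hw : w ∈ degLE n k) :
    Dirac n σ h (toLattice σ h k w) = toLattice σ h k (dirac n w) := by
  funext m
  simp only [Dirac, fdiff_toLattice hh _ hw, dirac, LinearMap.sum_apply, map_sum,
    Module.End.mul_apply, Finset.sum_apply, toLattice_mulLeft_apply]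

lemma vecCl_mul_toLattice (hw : w ∈ degLE n k) :
    (fun m => vecCl n h m * toLattice σ h k w m)
      = toLattice σ h (k + 1) (deformedMulVec n (sgn σ * h) w) := by
  funext m
  rw [deformedMulVec_eq_sum, LinearMap.sum_apply, map_sum, Finset.sum_apply, vecCl, sum_mul]
  refine sum_congr rfl fun i _ => ?_
  rw [Module.End.mul_apply, toLattice_mulLeft_apply, ← coord_mul_toLattice i hw, smul_mul_assoc,
    mul_smul_comm]

lemma vecCl_pow_mul_toLattice {j : ℕ} {u : Coeff n} (hu : u ∈ degLE n j) (s : ℕ) :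
    (fun m => vecCl n h m ^ s * toLattice σ h j u m)
      = toLattice σ h (j + s) ((deformedMulVec n (sgn σ * h) ^ s) u) := by
  induction s with
  | zero => simp
  | succ s ih =>
    have hmem := pow_apply_mem_of_mapsTo (S := degLE n)
      (fun _ _ => deformedMulVec_mem_degLE (sgn σ * h)) s hu
    rw [pow_succ', Module.End.mul_apply, ← add_assoc, ← vecCl_mul_toLattice hmem, ← ih]
    simp only [pow_succ', mul_assoc]

lemma PiLe_eq_map (k : ℕ) : PiLe n σ h k = (degLE n k).map (toLattice σ h k) := by
  refine le_antisymm (Submodule.span_le.2 ?_) ?_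
  · rintro f ⟨α, a, hα, rfl⟩
    exact ⟨Pi.single α a, single_mem_degLE hα a, toLattice_single hα a⟩
  · rintro f ⟨w, -, rfl⟩
    rw [toLattice_eq_sum]
    exact Submodule.sum_mem _ fun α hα => Submodule.subset_span ⟨α, w α, mem_degFinset.1 hα, rfl⟩

end Lattice

end Fischer

open Fischer

/-- Theorem 3.4 (Fischer decomposition): every `P ∈ Π_k^±` decomposes as
`P = Σ_{s=0}^k (mh)^s M_s` with each `M_s ∈ Π_{k-s}^±` discrete monogenic. -/
theorem fischer_decomposition (n : ℕ) (hn : 1 ≤ n) (h : ℝ) (hh : 0 < h) (σ : Bool)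
    (k : ℕ) (P : (Fin n → ℤ) → Cl n) (hP : P ∈ PiLe n σ h k) :
    ∃ M : ℕ → ((Fin n → ℤ) → Cl n),
      (∀ s ≤ k, M s ∈ PiLe n σ h (k - s) ∧ Dirac n σ h (M s) = 0) ∧
      P = fun m => ∑ s ∈ range (k + 1), (vecCl n h m) ^ s * M s m := by
  obtain ⟨w, hw, rfl⟩ := (PiLe_eq_map k ▸ hP : P ∈ (degLE n k).map (toLattice σ h k))
  obtain ⟨M, hM, hwM⟩ := exists_eq_sum_deformedMulVec_pow hn (sgn σ * h) k w hw
  refine ⟨fun s => toLattice σ h (k - s) (M s), fun s _ => ⟨?_, ?_⟩, ?_⟩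
  · exact PiLe_eq_map (k - s) ▸ Submodule.mem_map_of_mem (hM s).1
  · rw [Dirac_toLattice hh.ne' (hM s).1, (hM s).2, map_zero]
  · funext m
    rw [hwM, map_sum, Finset.sum_apply]
    refine sum_congr rfl fun s hs => ?_
    have := congrFun (vecCl_pow_mul_toLattice (σ := σ) (h := h) (hM s).1 s) m
    rw [Nat.sub_add_cancel (Nat.lt_succ_iff.1 (mem_range.1 hs))] at this
    exact this.symm
end
end

section
/- Commutator of the difference Dirac and Euler operators: for every lattice function f : ℤⁿ → Cl_{0,n} and each sign choice, D_h^±(E_h^± f) = D_h^± f + E_h^±(D_h^± f). -/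
open Finset

noncomputable section

set_option maxHeartbeats 1000000 in
/-- Proposition 3.1: `D_h^± E_h^± f = D_h^± f + E_h^± D_h^± f`. -/
theorem dirac_euler_commutator (n : ℕ) (hn : 1 ≤ n) (h : ℝ) (hh : 0 < h) (σ : Bool)
    (f : (Fin n → ℤ) → Cl n) :
    Dirac n σ h (Euler n σ h f)
      = Dirac n σ h f + Euler n σ h (Dirac n σ h f) := by
  have hh' : h ≠ 0 := ne_of_gt hh
  funext m
  cases σ
  case false =>
    simp only [Dirac, Euler, fdiff, shiftB, Bool.false_eq_true, if_false, add_sub_cancel_right,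
      smul_smul, mul_inv_cancel_right₀ hh', sub_add_cancel, Pi.sub_apply, Pi.single_apply,
      Int.cast_sub, Int.cast_ite, Int.cast_one, Int.cast_zero, Pi.add_apply]
    simp only [sub_smul, ite_smul, one_smul, zero_smul, Finset.sum_ite_eq', Finset.mem_univ,
      if_true, smul_sub, mul_sub, mul_add, mul_smul_comm, Finset.smul_sum, Finset.mul_sum,
      Finset.sum_sub_distrib, Finset.sum_add_distrib, sub_add_eq_add_sub, smul_smul]
    simp only [smul_add, smul_sub, Finset.smul_sum, smul_smul, add_sub_cancel_right,
      sub_add_cancel, mul_comm, Finset.sum_add_distrib, Finset.sum_sub_distrib]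
    have e1 : (∑ x : Fin n, ∑ x_1 : Fin n,
        ((m x_1 : ℝ) * h⁻¹) • (eCl n x * f (m + Pi.single x_1 1)))
        = ∑ x_1 : Fin n, ∑ x : Fin n,
        ((m x_1 : ℝ) * h⁻¹) • (eCl n x * f (m + Pi.single x_1 1)) := Finset.sum_comm
    have e2 : (∑ x : Fin n, ∑ x_1 : Fin n, ((m x_1 : ℝ) * h⁻¹) • (eCl n x * f m))
        = ∑ x_1 : Fin n, ∑ x : Fin n, ((m x_1 : ℝ) * h⁻¹) • (eCl n x * f m) := Finset.sum_comm
    have e3 : (∑ x : Fin n, ∑ x_1 : Fin n,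
        ((m x_1 : ℝ) * h⁻¹) • (eCl n x * f (m + Pi.single x_1 1 - Pi.single x 1)))
        = ∑ x_1 : Fin n, ∑ x : Fin n,
        ((m x_1 : ℝ) * h⁻¹) • (eCl n x * f (m + Pi.single x_1 1 - Pi.single x 1)) :=
      Finset.sum_comm
    have e5 : (∑ x : Fin n, ∑ x_1 : Fin n,
        ((m x_1 : ℝ) * h⁻¹) • (eCl n x * f (m - Pi.single x 1)))
        = ∑ x_1 : Fin n, ∑ x : Fin n,
        ((m x_1 : ℝ) * h⁻¹) • (eCl n x * f (m - Pi.single x 1)) := Finset.sum_comm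
    rw [e1, e2, e3, e5]
    abel
  case true =>
    simp only [Dirac, Euler, fdiff, shiftB, if_true, sub_add_cancel, smul_smul,
      mul_inv_cancel_right₀ hh', add_sub_cancel_right, Pi.add_apply, Pi.single_apply,
      Int.cast_add, Int.cast_ite, Int.cast_one, Int.cast_zero]
    simp only [add_smul, ite_smul, one_smul, zero_smul, Finset.sum_ite_eq', Finset.mem_univ,
      if_true, smul_sub, mul_sub, mul_add, mul_smul_comm, Finset.smul_sum, Finset.mul_sum,
      Finset.sum_sub_distrib, Finset.sum_add_distrib, sub_add_eq_add_sub, smul_smul]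
    simp only [smul_add, Finset.smul_sum, smul_smul, add_sub_cancel_right, mul_comm]
    simp only [Finset.sum_add_distrib]
    have e1 : (∑ x : Fin n, ∑ x_1 : Fin n,
        ((m x_1 : ℝ) * h⁻¹) • (eCl n x * f (m + Pi.single x 1)))
        = ∑ x_1 : Fin n, ∑ x : Fin n,
        ((m x_1 : ℝ) * h⁻¹) • (eCl n x * f (m + Pi.single x 1)) := Finset.sum_comm
    have e3 : (∑ x : Fin n, ∑ x_1 : Fin n,
        ((m x_1 : ℝ) * h⁻¹) • (eCl n x * f (m + Pi.single x 1 - Pi.single x_1 1)))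
        = ∑ x_1 : Fin n, ∑ x : Fin n,
        ((m x_1 : ℝ) * h⁻¹) • (eCl n x * f (m + Pi.single x 1 - Pi.single x_1 1)) :=
      Finset.sum_comm
    have e6 : (∑ x : Fin n, ∑ x_1 : Fin n,
        ((m x_1 : ℝ) * h⁻¹) • (eCl n x * f (m - Pi.single x_1 1)))
        = ∑ x_1 : Fin n, ∑ x : Fin n,
        ((m x_1 : ℝ) * h⁻¹) • (eCl n x * f (m - Pi.single x_1 1)) := Finset.sum_comm
    have e5 : (∑ x : Fin n, ∑ x_1 : Fin n, ((m x_1 : ℝ) * h⁻¹) • (eCl n x * f m))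
        = ∑ x_1 : Fin n, ∑ x : Fin n, ((m x_1 : ℝ) * h⁻¹) • (eCl n x * f m) := Finset.sum_comm
    rw [e1, e3, e5, e6]
    abel
end
end

section
/- For every lattice function f : ℤⁿ → Cl_{0,n} and each sign choice, B_h^±((mh)·f) = (mh)·(B_h^± f) + h·𝟙^±·f + h²·(D_h^± f), where 𝟙^± := ±Σ_{i=1}^n e_i acts by pointwise left multiplication and (mh)·g denotes pointwise left multiplication by the Clifford vector mh. -/
open Finset

noncomputable section

lemma vec_shift_add (n : ℕ) (h : ℝ) (i : Fin n) (m : Fin n → ℤ) :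
    vecCl n h (m + Pi.single i 1) = vecCl n h m + h • eCl n i := by
  unfold vecCl
  have h1 : ∑ j, (((Pi.single i 1 : Fin n → ℤ) j : ℝ) * h) • eCl n j = h • eCl n i := by
    rw [Finset.sum_eq_single i]
    · simp
    · intro j _ hj; simp [Pi.single_apply, hj]
    · simp
  rw [← h1, ← Finset.sum_add_distrib]
  apply Finset.sum_congr rfl
  intro j _
  simp [Pi.add_apply, add_mul, add_smul]

lemma vec_shift_sub (n : ℕ) (h : ℝ) (i : Fin n) (m : Fin n → ℤ) :
    vecCl n h (m - Pi.single i 1) = vecCl n h m - h • eCl n i := by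
  have := vec_shift_add n h i (m - Pi.single i 1)
  simp at this
  rw [this]; abel

/-- Formula (3.26): `B_h^±((mh) f) = (mh) B_h^± f + h 𝟙^± f + h² D_h^± f`,
where `𝟙^± = ± Σᵢ eᵢ`. -/
theorem Bop_vec_mul (n : ℕ) (hn : 1 ≤ n) (h : ℝ) (hh : 0 < h) (σ : Bool)
    (f : (Fin n → ℤ) → Cl n) :
    Bop n σ h (fun m => vecCl n h m * f m)
      = fun m => vecCl n h m * Bop n σ h f m
          + h • ((sgn σ • ∑ i, eCl n i) * f m) + (h ^ 2) • Dirac n σ h f m := by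
  have hne : h ≠ 0 := hh.ne'
  funext m
  cases σ <;>
    simp only [Bop, Dirac, fdiff, sgn, Bool.false_eq_true, if_true, if_false,
      Finset.smul_sum, Finset.mul_sum, Finset.sum_mul, smul_mul_assoc] <;>
    rw [← Finset.sum_add_distrib, ← Finset.sum_add_distrib] <;>
    refine Finset.sum_congr rfl fun i _ => ?_
  · rw [vec_shift_sub]
    have : f (m - Pi.single i 1) = f m - h • h⁻¹ • (f m - f (m - Pi.single i 1)) := by
      rw [smul_inv_smul₀ hne]; abel
    rw [this]
    simp only [mul_sub, mul_add, sub_mul, smul_mul_assoc, mul_smul_comm, smul_sub, smul_add,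
      smul_smul]
    match_scalars <;> field_simp <;> ring
  · rw [vec_shift_add]
    have : f (m + Pi.single i 1) = f m + h • h⁻¹ • (f (m + Pi.single i 1) - f m) := by
      rw [smul_inv_smul₀ hne]; abel
    rw [this]
    simp only [mul_sub, mul_add, add_mul, smul_mul_assoc, mul_smul_comm, smul_sub, smul_add,
      smul_smul]
    match_scalars <;> field_simp <;> ring
end
end
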